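/- For every k ≥ 1 there exists ε with |ε| ≤ 1 such that 1/c_i = Σ_{j=0}^{k-1} (-1)^j/(u_i^{j+1} c_{i+1}^j) + ε/(u_i^{k+1} u_{i+1}^k). -/

import Mathlib

/-!
Since `D ≡ 2, 3 (mod 4)` is not a square, `√D` is irrational, so every complete quotient is
irrational and exceeds `1`; in particular `u i ≥ 1` and `u (i + 1) ≤ c (i + 1)`. Expanding
`1 / c i = 1 / (u i + 1 / c (i + 1))` as a finite geometric series in `-1 / (u i * c (i + 1))`
leaves the remainder `(-1) ^ k / (u i ^ k * c (i + 1) ^ k * c i)`, and `u i ≤ c i`,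
`u (i + 1) ≤ c (i + 1)` bound it by `1 / (u i ^ (k + 1) * u (i + 1) ^ k)`.
-/

open Real Finset

theorem Nat.not_isSquare_of_mod_four {D : ℕ} (hD : D % 4 = 2 ∨ D % 4 = 3) : ¬IsSquare D := by
  rintro ⟨r, rfl⟩
  have := Nat.mod_lt r (by norm_num : 4 > 0)
  rw [Nat.mul_mod] at hD
  interval_cases r % 4 <;> omega

theorem Irrational.one_lt_one_div_sub_floor {x : ℝ} (hx : Irrational x) : 1 < 1 / (x - ⌊x⌋) := by
  rw [Int.self_sub_floor]
  exact one_lt_one_div (Int.fract_pos.mpr (hx.ne_int _)) (Int.fract_lt_one x)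

theorem one_div_eq_sum_range_add_of_eq_add_one_div {K : Type*} [Field K] {x a b : K}
    (ha : a ≠ 0) (hb : b ≠ 0) (hx : x ≠ 0) (h : x = a + 1 / b) (m : ℕ) :
    1 / x = ∑ j ∈ range m, (-1) ^ j / (a ^ (j + 1) * b ^ j) + (-1) ^ m / (a ^ m * b ^ m * x) := by
  induction m with
  | zero => simp
  | succ m ih =>
    rw [sum_range_succ, ih, add_assoc]
    congr 1
    have hab : a * b + 1 ≠ 0 := by
      rw [h] at hx
      field_simp at hx
      exact (div_ne_zero_iff.mp hx).1
    subst h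
    field_simp
    ring

theorem abs_neg_one_pow_div_le {K : Type*} [Field K] [LinearOrder K] [IsStrictOrderedRing K]
    {x a b a' : K} (ha : 0 < a) (hax : a ≤ x) (ha' : 0 < a') (hab : a' ≤ b) (m : ℕ) :
    |(-1) ^ m / (a ^ m * b ^ m * x)| ≤ 1 / (a ^ (m + 1) * a' ^ m) := by
  have hb : 0 < b := ha'.trans_le hab
  have hx : 0 < x := ha.trans_le hax
  rw [abs_div, abs_pow, abs_neg, abs_one, one_pow,
    abs_of_pos (by positivity : 0 < a ^ m * b ^ m * x)]
  apply one_div_le_one_div_of_le (by positivity)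
  calc a ^ (m + 1) * a' ^ m = a ^ m * a' ^ m * a := by ring
    _ ≤ a ^ m * b ^ m * x := by gcongr

theorem exists_abs_le_one_eq_div {K : Type*} [Field K] [LinearOrder K] [IsStrictOrderedRing K]
    {r d : K} (hd : 0 < d) (hr : |r| ≤ 1 / d) : ∃ ε : K, |ε| ≤ 1 ∧ r = ε / d := by
  refine ⟨r * d, ?_, by field_simp⟩
  rw [abs_mul, abs_of_pos hd]
  rwa [le_div_iff₀ hd] at hr

theorem completeQuotient_irrational_and_one_lt {D : ℕ} (hD : D % 4 = 2 ∨ D % 4 = 3) (u : ℤ → ℤ) (c : ℤ → ℝ)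
    (hc0 : c 0 = √D) (hu : ∀ i : ℤ, 0 ≤ i → u i = ⌊c i⌋)
    (hcrec : ∀ i : ℤ, 0 ≤ i → c (i + 1) = 1 / (c i - u i)) (i : ℤ) (hi : 0 ≤ i) :
    Irrational (c i) ∧ 1 < c i := by
  induction i, hi using Int.leInduction with
  | base =>
    have hD2 : (1 : ℝ) < D := by
      norm_cast
      omega
    rw [hc0]
    exact ⟨irrational_sqrt_natCast_iff.mpr (Nat.not_isSquare_of_mod_four hD),
      Real.lt_sqrt_of_sq_lt (by simpa using hD2)⟩
  | succ i hi ih =>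
    rw [hcrec i hi, hu i hi]
    refine ⟨?_, ih.1.one_lt_one_div_sub_floor⟩
    rw [one_div]
    exact (ih.1.sub_intCast _).inv

theorem stmt5_general (D : ℕ) (hD4 : D % 4 = 2 ∨ D % 4 = 3)
    (u : ℤ → ℤ) (c : ℤ → ℝ)
    (hc0 : c 0 = Real.sqrt D)
    (hu : ∀ i : ℤ, 0 ≤ i → u i = ⌊c i⌋)
    (hcrec : ∀ i : ℤ, 0 ≤ i → c (i + 1) = 1 / (c i - u i)) :
    ∀ i : ℤ, 0 ≤ i → ∀ k : ℕ, 1 ≤ k → ∃ ε : ℝ, |ε| ≤ 1 ∧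
      1 / c i = (∑ j ∈ Finset.range k, (-1 : ℝ) ^ j / ((u i : ℝ) ^ (j + 1) * c (i + 1) ^ j))
        + ε / ((u i : ℝ) ^ (k + 1) * (u (i + 1) : ℝ) ^ k) := by
  intro i hi k _
  have hi1 : 0 ≤ i + 1 := by omega
  have hc := (completeQuotient_irrational_and_one_lt hD4 u c hc0 hu hcrec i hi).2
  have hc1 := (completeQuotient_irrational_and_one_lt hD4 u c hc0 hu hcrec (i + 1) hi1).2
  have hu_pos : (0 : ℝ) < u i := by exact_mod_cast hu i hi ▸ Int.floor_pos.mpr hc.le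
  have hu1_pos : (0 : ℝ) < u (i + 1) := by exact_mod_cast hu _ hi1 ▸ Int.floor_pos.mpr hc1.le
  have hu_le : (u i : ℝ) ≤ c i := hu i hi ▸ Int.floor_le _
  have hu1_le : (u (i + 1) : ℝ) ≤ c (i + 1) := hu _ hi1 ▸ Int.floor_le _
  have hc_eq : c i = u i + 1 / c (i + 1) := by rw [hcrec i hi, one_div_one_div]; ring
  rw [one_div_eq_sum_range_add_of_eq_add_one_div hu_pos.ne' (by positivity) (by positivity) hc_eq k]
  obtain ⟨ε, hε, hrem⟩ := exists_abs_le_one_eq_div (by positivity)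
    (abs_neg_one_pow_div_le hu_pos hu_le hu1_pos hu1_le k)
  exact ⟨ε, hε, by rw [hrem]⟩

theorem stmt5 (D : ℕ) (hDsf : Squarefree D) (hD4 : D % 4 = 2 ∨ D % 4 = 3)
    (u : ℤ → ℤ) (c : ℤ → ℝ)
    (hc0 : c 0 = Real.sqrt D)
    (hu : ∀ i : ℤ, 0 ≤ i → u i = ⌊c i⌋)
    (hcrec : ∀ i : ℤ, 0 ≤ i → c (i + 1) = 1 / (c i - u i)) :
    ∀ i : ℤ, 0 ≤ i → ∀ k : ℕ, 1 ≤ k → ∃ ε : ℝ, |ε| ≤ 1 ∧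
      1 / c i = (∑ j ∈ Finset.range k, (-1 : ℝ) ^ j / ((u i : ℝ) ^ (j + 1) * c (i + 1) ^ j))
        + ε / ((u i : ℝ) ^ (k + 1) * (u (i + 1) : ℝ) ^ k) :=
  stmt5_general D hD4 u c hc0 hu hcrec
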